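/- arXiv:1707.02039 — 4 statements merged into one kernel-verified Lean document; each statement's English description precedes it below -/
import Mathlib

section
/- In the graph C (depleted corona of C4), every identifying code has cardinality at least 3, and {x1, x2, x3} is the unique identifying code of cardinality 3. In particular, the minimum identifying-code number of C equals 3. -/
/-- Closed neighbourhood `N[v]` of a vertex `v` in a simple graph. -/
def closedNbhd {V : Type*} (G : SimpleGraph V) (v : V) : Set V :=
  {u | u = v ∨ G.Adj u v}

/-- `S` is an identifying code of `G`: all closed-neighbourhood intersections with `S`
are nonempty and pairwise distinct. -/
def IsIdCode {V : Type*} (G : SimpleGraph V) (S : Set V) : Prop :=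
  (∀ v, (closedNbhd G v ∩ S).Nonempty) ∧
    ∀ u v, closedNbhd G u ∩ S = closedNbhd G v ∩ S → u = v

/-- The depleted corona of `C₄`: vertices `0,1,2,3` are `x₁,x₂,x₃,x₄`,
vertices `4,5,6` are `y₁,y₂,y₃`. -/
def Cgraph : SimpleGraph (Fin 7) :=
  SimpleGraph.fromRel (fun a b =>
    ((a : ℕ), (b : ℕ)) ∈ ({(0,1), (1,2), (2,3), (0,3), (0,4), (1,5), (2,6)} : Set (ℕ × ℕ)))

def adjB : Fin 7 → Fin 7 → Bool := fun a b =>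
  decide (((a : ℕ), (b : ℕ)) ∈
    [(0,1), (1,2), (2,3), (0,3), (0,4), (1,5), (2,6),
     (1,0), (2,1), (3,2), (3,0), (4,0), (5,1), (6,2)])

set_option maxRecDepth 10000 in
lemma adj_iff (a b : Fin 7) : Cgraph.Adj a b ↔ adjB a b = true := by
  unfold Cgraph
  rw [SimpleGraph.fromRel_adj]
  simp only [Set.mem_insert_iff, Set.mem_singleton_iff]
  revert a b
  decide

def Nf (v : Fin 7) : Finset (Fin 7) :=
  Finset.univ.filter (fun u => u = v ∨ adjB u v = true)

lemma closedNbhd_eq (v : Fin 7) : closedNbhd Cgraph v = ↑(Nf v) := by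
  ext u
  simp [closedNbhd, Nf, adj_iff]

def FinP (F : Finset (Fin 7)) : Prop :=
  (∀ v, (Nf v ∩ F).Nonempty) ∧ ∀ u v : Fin 7, Nf u ∩ F = Nf v ∩ F → u = v

instance : DecidablePred FinP := fun _ => by unfold FinP; infer_instance

lemma id_iff (F : Finset (Fin 7)) : IsIdCode Cgraph ↑F ↔ FinP F := by
  simp only [IsIdCode, FinP, closedNbhd_eq, ← Finset.coe_inter,
    Finset.coe_nonempty, Finset.coe_inj]

set_option maxRecDepth 20000 in
lemma d1 : ∀ F : Finset (Fin 7), FinP F → 3 ≤ F.card := by decide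
set_option maxRecDepth 20000 in
lemma d2 : ∀ F : Finset (Fin 7), FinP F → F.card = 3 → F = {0, 1, 2} := by decide
set_option maxRecDepth 20000 in
lemma d3 : FinP {0, 1, 2} := by decide

theorem stmt1 :
    (∀ S : Set (Fin 7), IsIdCode Cgraph S → 3 ≤ S.ncard) ∧
    (∀ S : Set (Fin 7), IsIdCode Cgraph S → S.ncard = 3 → S = {0, 1, 2}) ∧
    (IsIdCode Cgraph ({0, 1, 2} : Set (Fin 7)) ∧ ({0, 1, 2} : Set (Fin 7)).ncard = 3) ∧
    sInf {n : ℕ | ∃ S : Set (Fin 7), IsIdCode Cgraph S ∧ S.ncard = n} = 3 := by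
  have hcoe : (({0, 1, 2} : Finset (Fin 7)) : Set (Fin 7)) = ({0, 1, 2} : Set (Fin 7)) := by
    simp
  have hid3 : IsIdCode Cgraph ({0, 1, 2} : Set (Fin 7)) := by
    rw [← hcoe]; exact (id_iff _).mpr d3
  have hcard3 : ({0, 1, 2} : Set (Fin 7)).ncard = 3 := by
    rw [← hcoe, Set.ncard_coe_finset]; decide
  have key : ∀ S : Set (Fin 7), IsIdCode Cgraph S →
      3 ≤ S.ncard ∧ (S.ncard = 3 → S = {0, 1, 2}) := by
    intro S hS
    have hfin : S.Finite := Set.toFinite S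
    have hF : (hfin.toFinset : Set (Fin 7)) = S := hfin.coe_toFinset
    rw [← hF] at hS ⊢
    have hP : FinP hfin.toFinset := (id_iff _).mp hS
    rw [Set.ncard_coe_finset]
    refine ⟨d1 _ hP, fun hc => ?_⟩
    rw [d2 _ hP hc, hcoe]
  refine ⟨fun S hS => (key S hS).1, fun S hS hc => (key S hS).2 hc, ⟨hid3, hcard3⟩, ?_⟩
  have hmem : 3 ∈ {n : ℕ | ∃ S : Set (Fin 7), IsIdCode Cgraph S ∧ S.ncard = n} :=
    ⟨{0, 1, 2}, hid3, hcard3⟩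
  refine le_antisymm (Nat.sInf_le hmem) (le_csInf ⟨3, hmem⟩ ?_)
  rintro n ⟨S, hS, rfl⟩
  exact (key S hS).1
end

section
/- Let H be a graph with vertex set {v1, ..., vn}, n ≥ 1, and let G be obtained from H by adding vertices a, b, c each adjacent to every vertex of H, together with pendant vertices c1, c2 adjacent only to c. Then for each i, the set {c, v_i} is a minimum total dominating set of G, a minimum paired-dominating set of G, and a minimum connected dominating set of G, and these are all such minimum sets. -/
/-- `S` is a dominating set of `G`. -/
def IsDom {V : Type*} (G : SimpleGraph V) (S : Set V) : Prop :=
  ∀ v, v ∈ S ∨ ∃ u ∈ S, G.Adj u v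

/-- The graph `G` obtained from `H` by adding vertices `a = inr 0`, `b = inr 1`,
`c = inr 2`, each adjacent to every vertex of `H`, together with pendant vertices
`c₁ = inr 3`, `c₂ = inr 4` adjacent only to `c`. -/
def connGraph {V : Type*} (H : SimpleGraph V) : SimpleGraph (V ⊕ Fin 5) :=
  SimpleGraph.fromRel (fun p q =>
    (∃ a b, p = Sum.inl a ∧ q = Sum.inl b ∧ H.Adj a b) ∨
    (∃ a i, p = Sum.inl a ∧ q = Sum.inr i ∧ (i : ℕ) < 3) ∨
    (p = Sum.inr 2 ∧ (q = Sum.inr 3 ∨ q = Sum.inr 4)))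

/-- `S` is a total dominating set of `G`. -/
def IsTotalDom {V : Type*} (G : SimpleGraph V) (S : Set V) : Prop :=
  ∀ v, ∃ u ∈ S, G.Adj u v

/-- `S` is a paired-dominating set of `G`: total dominating and the induced
subgraph on `S` has a perfect matching. -/
def IsPairedDom {V : Type*} (G : SimpleGraph V) (S : Set V) : Prop :=
  IsTotalDom G S ∧ ∃ M : (G.induce S).Subgraph, M.IsPerfectMatching

/-- `S` is a connected dominating set of `G`. -/
def IsConnDom {V : Type*} (G : SimpleGraph V) (S : Set V) : Prop :=
  IsDom G S ∧ (G.induce S).Connected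

section helpers
variable {V : Type*} [Finite V] {H : SimpleGraph V}

lemma adj_c_inl (x : V) : (connGraph H).Adj (Sum.inr 2) (Sum.inl x) := by
  rw [connGraph, SimpleGraph.fromRel_adj]
  exact ⟨by simp, Or.inr (Or.inr (Or.inl ⟨x, 2, rfl, rfl, by decide⟩))⟩

lemma adj_inl_i (x : V) {i : Fin 5} (hi : (i:ℕ) < 3) :
    (connGraph H).Adj (Sum.inl x) (Sum.inr i) := by
  rw [connGraph, SimpleGraph.fromRel_adj]
  exact ⟨by simp, Or.inl (Or.inr (Or.inl ⟨x, i, rfl, rfl, hi⟩))⟩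

lemma adj_c_c1 : (connGraph H).Adj (Sum.inr 2) (Sum.inr 3) := by
  rw [connGraph, SimpleGraph.fromRel_adj]
  exact ⟨by simp, Or.inl (Or.inr (Or.inr ⟨rfl, Or.inl rfl⟩))⟩

lemma adj_c_c2 : (connGraph H).Adj (Sum.inr 2) (Sum.inr 4) := by
  rw [connGraph, SimpleGraph.fromRel_adj]
  exact ⟨by simp, Or.inl (Or.inr (Or.inr ⟨rfl, Or.inr rfl⟩))⟩

lemma adj_to_c1 {u} (h : (connGraph H).Adj u (Sum.inr 3)) : u = Sum.inr 2 := by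
  rw [connGraph, SimpleGraph.fromRel_adj] at h
  obtain ⟨hne, h | h⟩ := h <;>
    rcases h with ⟨a, b, h1, h2, h3⟩ | ⟨a, i, h1, h2, h3⟩ | ⟨h1, h2⟩ <;>
    simp_all <;> omega

lemma adj_to_c2 {u} (h : (connGraph H).Adj u (Sum.inr 4)) : u = Sum.inr 2 := by
  rw [connGraph, SimpleGraph.fromRel_adj] at h
  obtain ⟨hne, h | h⟩ := h <;>
    rcases h with ⟨a, b, h1, h2, h3⟩ | ⟨a, i, h1, h2, h3⟩ | ⟨h1, h2⟩ <;>
    simp_all <;> omega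

lemma adj_to_a {u} (h : (connGraph H).Adj u (Sum.inr 0)) : ∃ x, u = Sum.inl x := by
  rw [connGraph, SimpleGraph.fromRel_adj] at h
  obtain ⟨hne, h | h⟩ := h <;>
    rcases h with ⟨a, b, h1, h2, h3⟩ | ⟨a, i, h1, h2, h3⟩ | ⟨h1, h2⟩ <;>
    simp_all

lemma adj_to_b {u} (h : (connGraph H).Adj u (Sum.inr 1)) : ∃ x, u = Sum.inl x := by
  rw [connGraph, SimpleGraph.fromRel_adj] at h
  obtain ⟨hne, h | h⟩ := h <;>
    rcases h with ⟨a, b, h1, h2, h3⟩ | ⟨a, i, h1, h2, h3⟩ | ⟨h1, h2⟩ <;>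
    simp_all

lemma three_le_ncard {α : Type*} {S : Set α} (hS : S.Finite) {a b c : α}
    (ha : a ∈ S) (hb : b ∈ S) (hc : c ∈ S) (hab : a ≠ b) (hac : a ≠ c) (hbc : b ≠ c) :
    3 ≤ S.ncard := by
  classical
  have hsub : ({a, b, c} : Set α) ⊆ S := by
    intro x hx
    rcases hx with rfl | rfl | rfl <;> assumption
  have h3 : ({a, b, c} : Set α).ncard = 3 := by
    rw [Set.ncard_insert_of_notMem (by simp [hab, hac]) (Set.toFinite _),
      Set.ncard_pair hbc]
  rw [← h3]
  exact Set.ncard_le_ncard hsub hS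

lemma td_pair (i : V) : IsTotalDom (connGraph H) {Sum.inr 2, Sum.inl i} := by
  rintro (x | j)
  · exact ⟨Sum.inr 2, Or.inl rfl, adj_c_inl x⟩
  · fin_cases j
    · exact ⟨Sum.inl i, Or.inr rfl, adj_inl_i i (by decide)⟩
    · exact ⟨Sum.inl i, Or.inr rfl, adj_inl_i i (by decide)⟩
    · exact ⟨Sum.inl i, Or.inr rfl, adj_inl_i i (by decide)⟩
    · exact ⟨Sum.inr 2, Or.inl rfl, adj_c_c1⟩
    · exact ⟨Sum.inr 2, Or.inl rfl, adj_c_c2⟩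

lemma dom_pair (i : V) : IsDom (connGraph H) {Sum.inr 2, Sum.inl i} := by
  intro v
  exact Or.inr (td_pair i v)

lemma conn_pair (i : V) :
    ((connGraph H).induce {Sum.inr 2, Sum.inl i}).Connected := by
  rw [SimpleGraph.connected_iff]
  constructor
  · rintro ⟨u, hu⟩ ⟨v, hv⟩
    have key : ∀ p q : (V ⊕ Fin 5), p ∈ ({Sum.inr 2, Sum.inl i} : Set _) →
        q ∈ ({Sum.inr 2, Sum.inl i} : Set _) → p = q ∨ (connGraph H).Adj p q := by
      rintro p q (rfl | rfl) (rfl | rfl)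
      · exact Or.inl rfl
      · exact Or.inr (adj_c_inl i)
      · exact Or.inr (adj_c_inl i).symm
      · exact Or.inl rfl
    rcases key u v hu hv with rfl | hadj
    · rfl
    · exact (SimpleGraph.Adj.reachable (by exact hadj))
  · exact ⟨⟨Sum.inr 2, Or.inl rfl⟩⟩

lemma paired_pair (i : V) : IsPairedDom (connGraph H) {Sum.inr 2, Sum.inl i} := by
  refine ⟨td_pair i, ?_⟩
  have hadj : ((connGraph H).induce {Sum.inr 2, Sum.inl i}).Adj
      ⟨Sum.inr 2, Or.inl rfl⟩ ⟨Sum.inl i, Or.inr rfl⟩ := by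
    exact adj_c_inl i
  refine ⟨((connGraph H).induce {Sum.inr 2, Sum.inl i}).subgraphOfAdj hadj,
    SimpleGraph.Subgraph.IsMatching.subgraphOfAdj hadj, ?_⟩
  rintro ⟨v, hv⟩
  rw [SimpleGraph.subgraphOfAdj_verts]
  rcases hv with rfl | rfl
  · exact Or.inl rfl
  · exact Or.inr rfl

lemma two_le_of_td {S : Set (V ⊕ Fin 5)} (h : IsTotalDom (connGraph H) S) :
    2 ≤ S.ncard := by
  obtain ⟨u, hu, hadj⟩ := h (Sum.inr 3)
  obtain rfl := adj_to_c1 hadj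
  obtain ⟨w, hw, hadjw⟩ := h (Sum.inr 0)
  obtain ⟨x, rfl⟩ := adj_to_a hadjw
  exact (Set.one_lt_ncard_iff (Set.toFinite S)).mpr ⟨_, _, hu, hw, by simp⟩

lemma two_le_of_dom {S : Set (V ⊕ Fin 5)} (h : IsDom (connGraph H) S) :
    2 ≤ S.ncard := by
  have h3 : ∃ u ∈ S, u = Sum.inr 3 ∨ u = Sum.inr 2 := by
    rcases h (Sum.inr 3) with hm | ⟨u, hu, hadj⟩
    · exact ⟨_, hm, Or.inl rfl⟩
    · exact ⟨u, hu, Or.inr (adj_to_c1 hadj)⟩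
  have h0 : ∃ w ∈ S, w = Sum.inr 0 ∨ ∃ x, w = Sum.inl x := by
    rcases h (Sum.inr 0) with hm | ⟨w, hw, hadj⟩
    · exact ⟨_, hm, Or.inl rfl⟩
    · exact ⟨w, hw, Or.inr (adj_to_a hadj)⟩
  obtain ⟨u, hu, hu'⟩ := h3
  obtain ⟨w, hw, hw'⟩ := h0
  refine (Set.one_lt_ncard_iff (Set.toFinite S)).mpr ⟨u, w, hu, hw, ?_⟩
  rcases hu' with rfl | rfl <;> rcases hw' with rfl | ⟨x, rfl⟩ <;> simp

lemma td_eq {S : Set (V ⊕ Fin 5)} (h : IsTotalDom (connGraph H) S)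
    (hle : S.ncard ≤ 2) : ∃ i, S = {Sum.inr 2, Sum.inl i} := by
  obtain ⟨u, hu, hadj⟩ := h (Sum.inr 3)
  obtain rfl := adj_to_c1 hadj
  obtain ⟨w, hw, hadjw⟩ := h (Sum.inr 0)
  obtain ⟨x, rfl⟩ := adj_to_a hadjw
  refine ⟨x, ?_⟩
  have hsub : ({Sum.inr 2, Sum.inl x} : Set (V ⊕ Fin 5)) ⊆ S := by
    rintro v (rfl | rfl) <;> assumption
  have := Set.eq_of_subset_of_ncard_le hsub
    (by rwa [Set.ncard_pair (by simp)]) (Set.toFinite S)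
  exact this.symm

lemma conn_eq {S : Set (V ⊕ Fin 5)} (h : IsDom (connGraph H) S)
    (hle : S.ncard ≤ 2) : ∃ i, S = {Sum.inr 2, Sum.inl i} := by
  have hc2 : Sum.inr 2 ∈ S := by
    by_contra hc
    have h3 : Sum.inr 3 ∈ S := by
      rcases h (Sum.inr 3) with hm | ⟨u, hu, hadj⟩
      · exact hm
      · exact absurd (adj_to_c1 hadj ▸ hu) hc
    have h4 : Sum.inr 4 ∈ S := by
      rcases h (Sum.inr 4) with hm | ⟨u, hu, hadj⟩
      · exact hm
      · exact absurd (adj_to_c2 hadj ▸ hu) hc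
    have h0 : ∃ w ∈ S, w = Sum.inr 0 ∨ ∃ x, w = Sum.inl x := by
      rcases h (Sum.inr 0) with hm | ⟨w, hw, hadj⟩
      · exact ⟨_, hm, Or.inl rfl⟩
      · exact ⟨w, hw, Or.inr (adj_to_a hadj)⟩
    obtain ⟨w, hw, rfl | ⟨x, rfl⟩⟩ := h0 <;>
      exact absurd hle (by
        have := three_le_ncard (Set.toFinite S) h3 h4 hw (by simp) (by simp) (by simp)
        omega)
  have hx : ∃ x, Sum.inl x ∈ S := by
    by_contra hc
    push_neg at hc
    have h0 : Sum.inr 0 ∈ S := by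
      rcases h (Sum.inr 0) with hm | ⟨w, hw, hadj⟩
      · exact hm
      · obtain ⟨x, rfl⟩ := adj_to_a hadj
        exact absurd hw (hc x)
    have h1 : Sum.inr 1 ∈ S := by
      rcases h (Sum.inr 1) with hm | ⟨w, hw, hadj⟩
      · exact hm
      · obtain ⟨x, rfl⟩ := adj_to_b hadj
        exact absurd hw (hc x)
    have := three_le_ncard (Set.toFinite S) hc2 h0 h1 (by simp) (by simp) (by simp)
    omega
  obtain ⟨x, hxm⟩ := hx
  refine ⟨x, ?_⟩
  have hsub : ({Sum.inr 2, Sum.inl x} : Set (V ⊕ Fin 5)) ⊆ S := by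
    rintro v (rfl | rfl) <;> assumption
  exact (Set.eq_of_subset_of_ncard_le hsub
    (by rwa [Set.ncard_pair (by simp)]) (Set.toFinite S)).symm

end helpers

theorem stmt9 {V : Type*} [Fintype V] [Nonempty V] (H : SimpleGraph V) :
    (∀ S : Set (V ⊕ Fin 5),
      (IsTotalDom (connGraph H) S ∧
        ∀ T, IsTotalDom (connGraph H) T → S.ncard ≤ T.ncard) ↔
      ∃ i : V, S = {Sum.inr 2, Sum.inl i}) ∧
    (∀ S : Set (V ⊕ Fin 5),
      (IsPairedDom (connGraph H) S ∧
        ∀ T, IsPairedDom (connGraph H) T → S.ncard ≤ T.ncard) ↔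
      ∃ i : V, S = {Sum.inr 2, Sum.inl i}) ∧
    (∀ S : Set (V ⊕ Fin 5),
      (IsConnDom (connGraph H) S ∧
        ∀ T, IsConnDom (connGraph H) T → S.ncard ≤ T.ncard) ↔
      ∃ i : V, S = {Sum.inr 2, Sum.inl i}) := by
  obtain ⟨i₀⟩ := ‹Nonempty V›
  have hp2 : ∀ i : V, ({Sum.inr 2, Sum.inl i} : Set (V ⊕ Fin 5)).ncard = 2 :=
    fun i => Set.ncard_pair (by simp)
  refine ⟨fun S => ⟨?_, ?_⟩, fun S => ⟨?_, ?_⟩, fun S => ⟨?_, ?_⟩⟩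
  · rintro ⟨hS, hmin⟩
    exact td_eq hS (by have := hmin _ (td_pair i₀); rwa [hp2] at this)
  · rintro ⟨i, rfl⟩
    exact ⟨td_pair i, fun T hT => by rw [hp2]; exact two_le_of_td hT⟩
  · rintro ⟨hS, hmin⟩
    exact td_eq hS.1 (by have := hmin _ (paired_pair i₀); rwa [hp2] at this)
  · rintro ⟨i, rfl⟩
    exact ⟨paired_pair i, fun T hT => by rw [hp2]; exact two_le_of_td hT.1⟩
  · rintro ⟨hS, hmin⟩
    exact conn_eq hS.1 (by have := hmin _ ⟨dom_pair i₀, conn_pair i₀⟩; rwa [hp2] at this)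
  · rintro ⟨i, rfl⟩
    exact ⟨⟨dom_pair i, conn_pair i⟩, fun T hT => by rw [hp2]; exact two_le_of_dom hT.1⟩
end

section
/- For every nontrivial connected graph G, ir(G) ≤ γ(G) ≤ 2·ir(G) − 1, where ir(G) is the irredundance number and γ(G) is the domination number. -/
/-- The private neighbourhood `pn[v, S] = N[v] − N[S − {v}]` of `v` with respect to `S`. -/
def privNbhd {V : Type*} (G : SimpleGraph V) (v : V) (S : Set V) : Set V :=
  {u | u = v ∨ G.Adj v u} \ {u | ∃ w ∈ S \ {v}, u = w ∨ G.Adj w u}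

/-- `S` is an irredundant set of `G`. -/
def IsIrr {V : Type*} (G : SimpleGraph V) (S : Set V) : Prop :=
  ∀ v ∈ S, (privNbhd G v S).Nonempty

/-- `S` is a maximal irredundant set of `G`. -/
def IsMaxIrr {V : Type*} (G : SimpleGraph V) (S : Set V) : Prop :=
  IsIrr G S ∧ ∀ T, S ⊂ T → ¬ IsIrr G T

/-
A minimum dominating set is minimal dominating, hence irredundant, and no proper
superset of a dominating set is irredundant; this gives `ir ≤ γ`.

Conversely let `X` be a maximal irredundant set with `k` elements. Maximality says that for every
`w ∉ X` with a private neighbour in `X ∪ {w}` some `s ∈ X` has all its private neighbours in `N[w]`.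
Applied to a vertex `v ∉ N[X]`, this produces `x ∈ X` all of whose private neighbours are adjacent
to `v`. If `X` does not dominate, take such a `v = u₀`, the resulting `x₀`, and a private neighbour
`q₀` of `x₀`; applying maximality to `q₀` (which has `u₀` as a private neighbour) gives `s₀ ∈ X`
with `pn[s₀, X] ⊆ N[q₀]`. Then `X - {s₀}` together with one private neighbour of each vertex of
`X`, chosen to be `q₀` at `x₀`, dominates `G` and has at most `2k - 1` elements.
-/

section

variable {V : Type*} {G : SimpleGraph V} {D T X : Set V}

lemma isDom_iff {S : Set V} : IsDom G S ↔ ∀ v, ∃ u ∈ S, v = u ∨ G.Adj u v := by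
  refine forall_congr' fun v => ⟨?_, ?_⟩
  · rintro (hv | ⟨u, hu, huv⟩)
    exacts [⟨v, hv, Or.inl rfl⟩, ⟨u, hu, Or.inr huv⟩]
  · rintro ⟨u, hu, rfl | huv⟩
    exacts [Or.inl hu, Or.inr ⟨u, hu, huv⟩]

lemma mem_privNbhd {p v : V} {S : Set V} :
    p ∈ privNbhd G v S ↔ (p = v ∨ G.Adj v p) ∧ ∀ w ∈ S, w ≠ v → ¬(p = w ∨ G.Adj w p) := by
  simp only [privNbhd, Set.mem_sdiff, Set.mem_ofPred_eq, Set.mem_singleton_iff, not_exists,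
    not_and, and_imp]

lemma mem_privNbhd_insert {u v : V} (huv : u = v ∨ G.Adj v u)
    (hu : ∀ x ∈ X, ¬(u = x ∨ G.Adj x u)) : u ∈ privNbhd G v (insert v X) := by
  refine mem_privNbhd.2 ⟨huv, fun w hw hwv => ?_⟩
  rcases hw with rfl | hwX
  exacts [absurd rfl hwv, hu w hwX]

lemma IsDom.isIrr_of_minimal (hD : IsDom G D) (hmin : ∀ T ⊂ D, ¬IsDom G T) : IsIrr G D := by
  intro v hv
  obtain ⟨w, hw⟩ := not_forall.1 (hmin _ (Set.sdiff_singleton_ssubset.2 hv))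
  rw [not_or, not_exists] at hw
  refine ⟨w, mem_privNbhd.2 ⟨?_, fun z hz hzv hwz => ?_⟩⟩
  · rcases hD w with hwD | ⟨u, huD, huw⟩
    · exact Or.inl (by_contra fun hwv => hw.1 ⟨hwD, hwv⟩)
    · obtain rfl : u = v := by_contra fun huv => hw.2 u ⟨⟨huD, huv⟩, huw⟩
      exact Or.inr huw
  · rcases hwz with rfl | hzw
    exacts [hw.1 ⟨hz, hzv⟩, hw.2 z ⟨⟨hz, hzv⟩, hzw⟩]

lemma IsDom.not_isIrr_of_ssubset (hD : IsDom G D) (hDT : D ⊂ T) : ¬IsIrr G T := by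
  intro hT
  obtain ⟨t, htT, htD⟩ := Set.exists_of_ssubset hDT
  obtain ⟨p, hp⟩ := hT t htT
  obtain ⟨u, huD, hpu⟩ := isDom_iff.1 hD p
  exact (mem_privNbhd.1 hp).2 u (hDT.1 huD) (fun h => htD (h ▸ huD)) hpu

lemma IsDom.isMaxIrr_of_minimal (hD : IsDom G D) (hmin : ∀ T ⊂ D, ¬IsDom G T) : IsMaxIrr G D :=
  ⟨hD.isIrr_of_minimal hmin, fun _ => hD.not_isIrr_of_ssubset⟩

lemma IsMaxIrr.exists_privNbhd_subset (hX : IsMaxIrr G X) {w : V} (hw : w ∉ X)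
    (hwpn : (privNbhd G w (insert w X)).Nonempty) :
    ∃ s ∈ X, ∀ p ∈ privNbhd G s X, p = w ∨ G.Adj w p := by
  have hnirr := hX.2 _ (Set.ssubset_insert hw)
  simp only [IsIrr, not_forall, Set.not_nonempty_iff_eq_empty, exists_prop] at hnirr
  obtain ⟨s, hs, hspn⟩ := hnirr
  rcases hs with rfl | hsX
  · exact absurd hspn hwpn.ne_empty
  refine ⟨s, hsX, fun p hp => ?_⟩
  have hp' : p ∉ privNbhd G s (insert w X) := hspn ▸ Set.notMem_empty p
  obtain ⟨hps, hpX⟩ := mem_privNbhd.1 hp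
  simp only [mem_privNbhd, hps, true_and, not_forall, not_not] at hp'
  obtain ⟨z, hz, hzs, hpz⟩ := hp'
  rcases hz with rfl | hzX
  exacts [hpz, absurd hpz (hpX z hzX hzs)]

lemma IsMaxIrr.exists_forall_privNbhd_adj (hX : IsMaxIrr G X) {v : V}
    (hv : ∀ x ∈ X, ¬(v = x ∨ G.Adj x v)) : ∃ x ∈ X, ∀ p ∈ privNbhd G x X, G.Adj v p := by
  have hvX : v ∉ X := fun h => hv v h (Or.inl rfl)
  obtain ⟨x, hxX, hx⟩ :=
    hX.exists_privNbhd_subset hvX ⟨v, mem_privNbhd_insert (Or.inl rfl) hv⟩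
  refine ⟨x, hxX, fun p hp => (hx p hp).resolve_left ?_⟩
  rintro rfl
  exact hv x hxX (mem_privNbhd.1 hp).1

lemma exists_mem_insert_diff_of_privNbhd_subset {s q x v : V}
    (hs : ∀ p ∈ privNbhd G s X, p = q ∨ G.Adj q p) (hx : x ∈ X) (hvx : v = x ∨ G.Adj x v) :
    ∃ u ∈ insert q (X \ {s}), v = u ∨ G.Adj u v := by
  by_cases hxs : x = s
  · subst hxs
    by_cases hvpn : v ∈ privNbhd G x X
    · exact ⟨q, Set.mem_insert q _, hs v hvpn⟩
    · simp only [mem_privNbhd, hvx, true_and, not_forall, not_not] at hvpn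
      obtain ⟨z, hz, hzx, hvz⟩ := hvpn
      exact ⟨z, Or.inr ⟨hz, hzx⟩, hvz⟩
  · exact ⟨x, Or.inr ⟨hx, hxs⟩, hvx⟩

lemma IsMaxIrr.isDom_diff_union_image (hX : IsMaxIrr G X) {f : V → V}
    (hf : ∀ x ∈ X, f x ∈ privNbhd G x X) {s q : V}
    (hs : ∀ p ∈ privNbhd G s X, p = q ∨ G.Adj q p) (hq : q ∈ f '' X) :
    IsDom G (X \ {s} ∪ f '' X) := by
  refine isDom_iff.2 fun v => ?_
  by_cases hvX : ∃ x ∈ X, v = x ∨ G.Adj x v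
  · obtain ⟨x, hx, hvx⟩ := hvX
    obtain ⟨u, hu, hvu⟩ := exists_mem_insert_diff_of_privNbhd_subset hs hx hvx
    refine ⟨u, ?_, hvu⟩
    rcases hu with rfl | hu
    exacts [Or.inr hq, Or.inl hu]
  · obtain ⟨x, hx, hxv⟩ := hX.exists_forall_privNbhd_adj fun x hx hvx => hvX ⟨x, hx, hvx⟩
    exact ⟨f x, Or.inr ⟨x, hx, rfl⟩, Or.inr (hxv _ (hf x hx)).symm⟩

lemma IsMaxIrr.exists_isDom_ncard_le (hX : IsMaxIrr G X) (hXfin : X.Finite) :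
    ∃ D : Set V, IsDom G D ∧ D.ncard ≤ 2 * X.ncard - 1 := by
  classical
  by_cases hXdom : IsDom G X
  · exact ⟨X, hXdom, by omega⟩
  obtain ⟨u₀, hu₀⟩ : ∃ u₀, ∀ x ∈ X, ¬(u₀ = x ∨ G.Adj x u₀) := by
    simpa [isDom_iff] using hXdom
  obtain ⟨x₀, hx₀, hx₀u₀⟩ := hX.exists_forall_privNbhd_adj hu₀
  obtain ⟨q₀, hq₀⟩ := hX.1 x₀ hx₀
  have hq₀X : q₀ ∉ X := fun h => hu₀ q₀ h (Or.inr (hx₀u₀ q₀ hq₀).symm)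
  obtain ⟨s₀, hs₀, hs₀q₀⟩ := hX.exists_privNbhd_subset hq₀X
    ⟨u₀, mem_privNbhd_insert (Or.inr (hx₀u₀ q₀ hq₀).symm) hu₀⟩
  obtain ⟨f, hf⟩ : ∃ f : V → V, ∀ x ∈ X, f x ∈ privNbhd G x X :=
    ⟨fun x => if h : x ∈ X then (hX.1 x h).some else x,
      fun x hx => by simpa [hx] using (hX.1 x hx).some_mem⟩
  set F := Function.update f x₀ q₀
  have hF : ∀ x ∈ X, F x ∈ privNbhd G x X := by
    intro x hx
    rcases eq_or_ne x x₀ with rfl | hxx₀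
    · simpa [F] using hq₀
    · simpa [F, hxx₀] using hf x hx
  refine ⟨X \ {s₀} ∪ F '' X, hX.isDom_diff_union_image hF hs₀q₀ ⟨x₀, hx₀, by simp [F]⟩, ?_⟩
  calc (X \ {s₀} ∪ F '' X).ncard ≤ (X \ {s₀}).ncard + (F '' X).ncard := Set.ncard_union_le _ _
    _ ≤ (X.ncard - 1) + X.ncard :=
      add_le_add (Set.ncard_sdiff_singleton_of_mem hs₀).le (Set.ncard_image_le hXfin)
    _ = 2 * X.ncard - 1 := by
      have := (Set.ncard_pos hXfin).2 ⟨x₀, hx₀⟩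
      omega

lemma forall_ssubset_not_of_ncard_eq_sInf [Finite V] {P : Set V → Prop} {S : Set V}
    (hS : S.ncard = sInf {n | ∃ T, P T ∧ T.ncard = n}) : ∀ T ⊂ S, ¬P T := fun T hTS hT =>
  (Set.ncard_lt_ncard hTS).not_ge (hS ▸ Nat.sInf_le ⟨T, hT, rfl⟩)

lemma exists_isMaxIrr [Finite V] (G : SimpleGraph V) : ∃ S : Set V, IsMaxIrr G S := by
  obtain ⟨S, -, hS⟩ := Finite.exists_le_maximal (p := IsIrr G) (a := ∅) (by simp [IsIrr])
  exact ⟨S, hS.prop, fun T hST hT => hST.not_ge (hS.le_of_ge hT hST.le)⟩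

end

theorem stmt17_general {V : Type*} [Fintype V] (G : SimpleGraph V) :
    sInf {n : ℕ | ∃ S : Set V, IsMaxIrr G S ∧ S.ncard = n} ≤
      sInf {n : ℕ | ∃ S : Set V, IsDom G S ∧ S.ncard = n} ∧
    sInf {n : ℕ | ∃ S : Set V, IsDom G S ∧ S.ncard = n} ≤
      2 * sInf {n : ℕ | ∃ S : Set V, IsMaxIrr G S ∧ S.ncard = n} - 1 := by
  obtain ⟨D, hD, hDcard⟩ := Nat.sInf_mem (s := {n | ∃ S : Set V, IsDom G S ∧ S.ncard = n})
    ⟨_, Set.univ, fun v => Or.inl trivial, rfl⟩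
  obtain ⟨X, hX, hXcard⟩ := Nat.sInf_mem (s := {n | ∃ S : Set V, IsMaxIrr G S ∧ S.ncard = n})
    ((exists_isMaxIrr G).elim fun S hS => ⟨_, S, hS, rfl⟩)
  constructor
  · exact Nat.sInf_le
      ⟨D, hD.isMaxIrr_of_minimal (forall_ssubset_not_of_ncard_eq_sInf hDcard), hDcard⟩
  · obtain ⟨D', hD', hD'card⟩ := hX.exists_isDom_ncard_le X.toFinite
    rw [← hXcard]
    exact le_trans (Nat.sInf_le ⟨D', hD', rfl⟩) hD'card

theorem stmt17 {V : Type*} [Fintype V] (G : SimpleGraph V)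
    (hconn : G.Connected) (hnontrivial : 1 < Fintype.card V) :
    sInf {n : ℕ | ∃ S : Set V, IsMaxIrr G S ∧ S.ncard = n} ≤
      sInf {n : ℕ | ∃ S : Set V, IsDom G S ∧ S.ncard = n} ∧
    sInf {n : ℕ | ∃ S : Set V, IsDom G S ∧ S.ncard = n} ≤
      2 * sInf {n : ℕ | ∃ S : Set V, IsMaxIrr G S ∧ S.ncard = n} - 1 :=
  stmt17_general G
end

section
/- Let H be a graph with vertex set {v1, ..., vn}, n ≥ 1, and let G be obtained from H by adding three vertices a, b, c each adjacent to every vertex of H, together with pendant vertices c1, c2 adjacent only to c. Then the γ-graph of G (slide adjacency model) is isomorphic to H, via the map sending the minimum dominating set {c, v_i} of G to the vertex v_i of H. -/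
/-- The minimum dominating sets (γ-sets) of `G`. -/
def GammaSets {V : Type*} (G : SimpleGraph V) : Set (Set V) :=
  {S | IsDom G S ∧ ∀ T, IsDom G T → S.ncard ≤ T.ncard}

/-- The γ-graph of `G` under the slide adjacency model. -/
def gammaGraph {V : Type*} (G : SimpleGraph V) :
    SimpleGraph {S : Set V // S ∈ GammaSets G} :=
  SimpleGraph.fromRel (fun S S' =>
    ∃ u v, u ∈ S.1 ∧ v ∈ S'.1 ∧ G.Adj u v ∧ S'.1 = (S.1 \ {u}) ∪ {v})

section Aux
open Sum

variable {V : Type*} (H : SimpleGraph V)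

lemma conn_adj_inl_inl (v w : V) :
    (connGraph H).Adj (inl v) (inl w) ↔ H.Adj v w := by
  simp only [connGraph, SimpleGraph.fromRel_adj]
  constructor
  · rintro ⟨hne, h | h⟩ <;>
      rcases h with ⟨a, b, ha, hb, hab⟩ | ⟨a, i, ha, hb, _⟩ | ⟨ha, _⟩ <;>
      simp_all [H.adj_symm]
  · intro h
    exact ⟨by simp [h.ne], Or.inl (Or.inl ⟨v, w, rfl, rfl, h⟩)⟩

lemma conn_adj_inl_inr (v : V) (i : Fin 5) (hi : (i : ℕ) < 3) :
    (connGraph H).Adj (inl v) (inr i) := by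
  simp only [connGraph, SimpleGraph.fromRel_adj]
  exact ⟨by simp, Or.inl (Or.inr (Or.inl ⟨v, i, rfl, rfl, hi⟩))⟩

lemma conn_adj_c_34 (i : Fin 5) (hi : i = 3 ∨ i = 4) :
    (connGraph H).Adj (inr 2) (inr i) := by
  simp only [connGraph, SimpleGraph.fromRel_adj]
  rcases hi with h|h <;> subst h <;> exact ⟨by simp, by tauto⟩

lemma adj_inr34 (i : Fin 5) (hi : i = 3 ∨ i = 4) (x : V ⊕ Fin 5)
    (h : (connGraph H).Adj x (inr i)) : x = inr 2 := by
  simp only [connGraph, SimpleGraph.fromRel_adj] at h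
  obtain ⟨hne, h | h⟩ := h <;>
    rcases h with ⟨a, b, ha, hb, hab⟩ | ⟨a, j, ha, hb, hj⟩ | ⟨ha, hb⟩ <;>
    rcases hi with h3 | h3 <;> subst h3 <;> simp_all <;> omega

lemma adj_inr01 (i : Fin 5) (hi : i = 0 ∨ i = 1) (x : V ⊕ Fin 5)
    (h : (connGraph H).Adj x (inr i)) : ∃ a, x = inl a := by
  simp only [connGraph, SimpleGraph.fromRel_adj] at h
  obtain ⟨hne, h | h⟩ := h <;>
    rcases h with ⟨a, b, ha, hb, hab⟩ | ⟨a, j, ha, hb, hj⟩ | ⟨ha, hb⟩ <;>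
    rcases hi with h3 | h3 <;> subst h3 <;> simp_all

variable [Fintype V]

lemma ncard_ge_three {α : Type*} (S : Set α) (hS : S.Finite) (x y z : α)
    (hx : x ∈ S) (hy : y ∈ S) (hz : z ∈ S)
    (hxy : x ≠ y) (hxz : x ≠ z) (hyz : y ≠ z) : 3 ≤ S.ncard := by
  have h2 : ({y, z} : Set α).ncard = 2 := Set.ncard_pair hyz
  have hf : ({y, z} : Set α).Finite := (Set.finite_singleton z).insert y
  have h1 : ({x, y, z} : Set α).ncard = 3 := by
    rw [Set.ncard_insert_of_notMem (by simp [hxy, hxz]) hf, h2]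
  calc 3 = ({x, y, z} : Set α).ncard := h1.symm
    _ ≤ S.ncard := Set.ncard_le_ncard (by simp [Set.insert_subset_iff, hx, hy, hz]) hS

lemma isDom_pair (v : V) : IsDom (connGraph H) {inr 2, inl v} := by
  intro w
  rcases w with a | i
  · exact Or.inr ⟨inr 2, by simp, ((conn_adj_inl_inr H a 2 (by norm_num))).symm⟩
  · fin_cases i
    · exact Or.inr ⟨inl v, by simp, conn_adj_inl_inr H v 0 (by norm_num)⟩
    · exact Or.inr ⟨inl v, by simp, conn_adj_inl_inr H v 1 (by norm_num)⟩
    · exact Or.inl (by simp)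
    · exact Or.inr ⟨inr 2, by simp, conn_adj_c_34 H 3 (Or.inl rfl)⟩
    · exact Or.inr ⟨inr 2, by simp, conn_adj_c_34 H 4 (Or.inr rfl)⟩

variable [Fintype V]

lemma two_le_dom (T : Set (V ⊕ Fin 5)) (hT : IsDom (connGraph H) T) : 2 ≤ T.ncard := by
  obtain ⟨x, hxT, hx⟩ : ∃ x ∈ T, x = inr 3 ∨ x = inr 2 := by
    rcases hT (inr 3) with h | ⟨u, hu, hadj⟩
    · exact ⟨_, h, Or.inl rfl⟩
    · exact ⟨u, hu, Or.inr (adj_inr34 H 3 (Or.inl rfl) u hadj)⟩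
  obtain ⟨y, hyT, hy⟩ : ∃ y ∈ T, y = inr 0 ∨ ∃ a, y = inl a := by
    rcases hT (inr 0) with h | ⟨u, hu, hadj⟩
    · exact ⟨_, h, Or.inl rfl⟩
    · exact ⟨u, hu, Or.inr (adj_inr01 H 0 (Or.inl rfl) u hadj)⟩
  have hne : x ≠ y := by
    rcases hx with h | h <;> rcases hy with h' | ⟨a, h'⟩ <;> subst h <;> subst h' <;> simp
  have := (Set.one_lt_ncard_iff T.toFinite).mpr ⟨x, y, hxT, hyT, hne⟩
  omega

lemma gamma_mem (v : V) :
    ({inr 2, inl v} : Set (V ⊕ Fin 5)) ∈ GammaSets (connGraph H) := by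
  refine ⟨isDom_pair H v, fun T hT => ?_⟩
  rw [Set.ncard_pair (by simp)]
  exact two_le_dom H T hT

lemma gamma_char [Nonempty V] (S : Set (V ⊕ Fin 5)) (hS : S ∈ GammaSets (connGraph H)) :
    ∃ v, S = {inr 2, inl v} := by
  obtain ⟨hdom, hmin⟩ := hS
  have v₀ : V := Classical.arbitrary V
  have h2 : S.ncard ≤ 2 := by
    have := hmin _ (isDom_pair H v₀)
    rwa [Set.ncard_pair (by simp)] at this
  have hc : inr 2 ∈ S := by
    by_contra hc
    have h3 : inr 3 ∈ S := by
      rcases hdom (inr 3) with h | ⟨u, hu, hadj⟩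
      · exact h
      · exact absurd (adj_inr34 H 3 (Or.inl rfl) u hadj ▸ hu) hc
    have h4 : inr 4 ∈ S := by
      rcases hdom (inr 4) with h | ⟨u, hu, hadj⟩
      · exact h
      · exact absurd (adj_inr34 H 4 (Or.inr rfl) u hadj ▸ hu) hc
    obtain ⟨y, hyT, hy⟩ : ∃ y ∈ S, y = inr 0 ∨ ∃ a, y = inl a := by
      rcases hdom (inr 0) with h | ⟨u, hu, hadj⟩
      · exact ⟨_, h, Or.inl rfl⟩
      · exact ⟨u, hu, Or.inr (adj_inr01 H 0 (Or.inl rfl) u hadj)⟩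
    have := ncard_ge_three S S.toFinite y (inr 3) (inr 4) hyT h3 h4
      (by rcases hy with h | ⟨a, h⟩ <;> subst h <;> simp)
      (by rcases hy with h | ⟨a, h⟩ <;> subst h <;> simp)
      (by simp)
    omega
  obtain ⟨a, ha⟩ : ∃ a, inl a ∈ S := by
    rcases hdom (inr 0) with h0 | ⟨u, hu, hadj⟩
    · exfalso
      rcases hdom (inr 1) with h1 | ⟨u, hu, hadj⟩
      · have := ncard_ge_three S S.toFinite (inr 2) (inr 0) (inr 1) hc h0 h1
          (by simp) (by simp) (by simp)
        omega
      · obtain ⟨a, rfl⟩ := adj_inr01 H 1 (Or.inr rfl) u hadj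
        have := ncard_ge_three S S.toFinite (inr 2) (inr 0) (inl a) hc h0 hu
          (by simp) (by simp) (by simp)
        omega
    · obtain ⟨a, rfl⟩ := adj_inr01 H 0 (Or.inl rfl) u hadj
      exact ⟨a, hu⟩
  refine ⟨a, (Set.eq_of_subset_of_ncard_le ?_ ?_ S.toFinite).symm⟩
  · simp [Set.insert_subset_iff, hc, ha]
  · rw [Set.ncard_pair (by simp)]; exact h2

omit [Fintype V] in
lemma pair_inj (v w : V) (h : ({inr 2, inl v} : Set (V ⊕ Fin 5)) = {inr 2, inl w}) :
    v = w := by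
  have hv : (inl v : V ⊕ Fin 5) ∈ ({inr 2, inl w} : Set (V ⊕ Fin 5)) := h ▸ (by simp)
  simpa using hv

lemma slide_core (v w : V)
    (h : ∃ u x, u ∈ ({inr 2, inl v} : Set (V ⊕ Fin 5)) ∧
      x ∈ ({inr 2, inl w} : Set (V ⊕ Fin 5)) ∧ (connGraph H).Adj u x ∧
      ({inr 2, inl w} : Set (V ⊕ Fin 5)) = ({inr 2, inl v} \ {u}) ∪ {x}) :
    H.Adj v w := by
  obtain ⟨u, x, hu, hx, hadj, heq⟩ := h
  rcases (by simpa using hu : u = inr 2 ∨ u = inl v) with rfl | rfl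
  · exfalso
    have h2 : (inr 2 : V ⊕ Fin 5) ∈ ({inr 2, inl v} \ {inr 2} : Set (V ⊕ Fin 5)) ∪ {x} := by
      rw [← heq]; simp
    have : x = inr 2 := by
      rcases h2 with h2 | h2
      · exact absurd h2 (by simp)
      · exact h2.symm
    exact (connGraph H).irrefl (this ▸ hadj)
  · have h2 : (inl w : V ⊕ Fin 5) ∈ ({inr 2, inl v} \ {inl v} : Set (V ⊕ Fin 5)) ∪ {x} := by
      rw [← heq]; simp
    have hxw : x = inl w := by
      rcases h2 with h2 | h2
      · exact absurd h2 (by simp)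
      · exact h2.symm
    exact (conn_adj_inl_inl H v w).mp (hxw ▸ hadj)

lemma gamma_adj [Nonempty V] (S S' : {S : Set (V ⊕ Fin 5) // S ∈ GammaSets (connGraph H)})
    (v w : V) (hv : S.1 = {inr 2, inl v}) (hw : S'.1 = {inr 2, inl w}) :
    (gammaGraph (connGraph H)).Adj S S' ↔ H.Adj v w := by
  rw [gammaGraph, SimpleGraph.fromRel_adj]
  constructor
  · rintro ⟨hne, h | h⟩
    · rw [hv, hw] at h
      exact slide_core H v w h
    · rw [hv, hw] at h
      exact (slide_core H w v h).symm
  · intro h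
    refine ⟨?_, Or.inl ⟨inl v, inl w, by simp [hv], by simp [hw],
        (conn_adj_inl_inl H v w).mpr h, ?_⟩⟩
    · intro hSS
      exact h.ne (pair_inj v w (hv ▸ hw ▸ congrArg Subtype.val hSS))
    · rw [hv, hw]
      have h2v : (inr 2 : V ⊕ Fin 5) ≠ inl v := by simp
      ext z
      simp only [Set.mem_insert_iff, Set.mem_singleton_iff, Set.mem_union, Set.mem_diff]
      constructor
      · rintro (rfl | rfl)
        · exact Or.inl ⟨Or.inl rfl, h2v⟩
        · exact Or.inr rfl
      · rintro (⟨h1 | h1, h2⟩ | h1) <;> simp_all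


end Aux

open Sum in
theorem stmt19 {V : Type*} [Fintype V] [Nonempty V] (H : SimpleGraph V) :
    ∃ φ : gammaGraph (connGraph H) ≃g H,
      ∀ (S : {S : Set (V ⊕ Fin 5) // S ∈ GammaSets (connGraph H)}) (i : V),
        S.1 = ({Sum.inr 2, Sum.inl i} : Set (V ⊕ Fin 5)) → φ S = i := by
  classical
  set toV : {S : Set (V ⊕ Fin 5) // S ∈ GammaSets (connGraph H)} → V :=
    fun S => Classical.choose (gamma_char H S.1 S.2) with htoV
  have spec : ∀ S, S.1 = ({inr 2, inl (toV S)} : Set (V ⊕ Fin 5)) :=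
    fun S => Classical.choose_spec (gamma_char H S.1 S.2)
  have key : ∀ S i, S.1 = ({inr 2, inl i} : Set (V ⊕ Fin 5)) → toV S = i := by
    intro S i hi
    exact pair_inj _ _ ((spec S).symm.trans hi)
  refine ⟨⟨⟨toV, fun v => ⟨{inr 2, inl v}, gamma_mem H v⟩, ?_, ?_⟩, ?_⟩, key⟩
  · intro S
    exact Subtype.ext (spec S).symm
  · intro v
    exact key _ v rfl
  · intro S S'
    exact (gamma_adj H S S' (toV S) (toV S') (spec S) (spec S')).symm
end
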